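/- (Theorem 5, part 2) Let L ⊆ [n]³ be a PLS set and let S be an independent set of G_L that is (p,n²)-maximal for every p ∈ {0, 1, 2}. Then S is a 5/9-approximate solution of the PLSE instance L: for every independent set S* of G_L, 9·|S| ≥ 5·|S*|. -/

import Mathlib

/-- A PLS set: any two distinct triples have Hamming distance at least 2. -/
def IsPLS {n : ℕ} (T : Set (Fin 3 → Fin n)) : Prop :=
  ∀ v ∈ T, ∀ w ∈ T, v ≠ w → 2 ≤ hammingDist v w

/-- The node set `V_L = [n]³ \ (L ∪ N*(L))`. -/
def VL {n : ℕ} (L : Set (Fin 3 → Fin n)) : Set (Fin 3 → Fin n) :=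
  {v | v ∉ L ∧ ∀ w ∈ L, hammingDist v w ≠ 1}

/-- The graph `GraphL`: distinct nodes of `V_L` are adjacent iff their Hamming distance is 1. -/
def GraphL {n : ℕ} (L : Set (Fin 3 → Fin n)) : SimpleGraph (Fin 3 → Fin n) where
  Adj v w := v ∈ VL L ∧ w ∈ VL L ∧ hammingDist v w = 1
  symm := by
    constructor
    rintro v w ⟨hv, hw, h⟩
    exact ⟨hw, hv, by rwa [hammingDist_comm]⟩
  loopless := by
    constructor
    rintro v ⟨_, _, h⟩
    simp [hammingDist_self] at h

/-- An independent set of a simple graph. -/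
def IsIndep {V : Type*} (G : SimpleGraph V) (S : Set V) : Prop :=
  ∀ v ∈ S, ∀ w ∈ S, ¬ G.Adj v w

/-- The grid line `ℓ_{v,d}`: all triples agreeing with `v` in both coordinates other than `d`. -/
def gridLine {n : ℕ} (v : Fin 3 → Fin n) (d : Fin 3) : Set (Fin 3 → Fin n) :=
  {w | ∀ e, e ≠ d → w e = v e}

/-!
Put `T = S* \ S` and `S' = S \ S*`; the neighbours in `S` of a vertex of `T` all lie in `S'`.
In the Hamming graph a vertex has at most one neighbour per coordinate in an independent set,
hence at most three. Two-maximality forbids three local improvements: a vertex of `T` without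
neighbour in `S` (add it), two vertices of `T` whose only neighbour is the same `u` (swap `u` for
both), and a vertex of `T` whose two neighbours are each the only neighbour of some vertex of `T`
(swap those two for the three). Under these constraints a discharging argument gives
`5 |T| ≤ 9 |S'|`, and adding `|S ∩ S*|` to both sides yields the theorem.
-/

section Hamming

variable {ι : Type*} [Fintype ι] {β : ι → Type*} [∀ i, DecidableEq (β i)] {x y z : ∀ i, β i}

theorem hammingDist_eq_one_iff : hammingDist x y = 1 ↔ ∃ i, ∀ j, x j ≠ y j ↔ j = i := by
  simp only [hammingDist, Finset.card_eq_one, Finset.ext_iff, Finset.mem_filter,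
    Finset.mem_univ, true_and, Finset.mem_singleton]

theorem eq_of_hammingDist_eq_one {i j : ι} (h : hammingDist x y = 1) (hi : x i ≠ y i)
    (hj : j ≠ i) : x j = y j := by
  obtain ⟨k, hk⟩ := hammingDist_eq_one_iff.1 h
  by_contra hxy
  exact hj (((hk j).1 hxy).trans ((hk i).1 hi).symm)

theorem hammingDist_eq_one_of_ne_of_ne {i : ι} (hy : hammingDist x y = 1)
    (hz : hammingDist x z = 1) (hyi : x i ≠ y i) (hzi : x i ≠ z i) (hyz : y ≠ z) :
    hammingDist y z = 1 := by
  have h_off : ∀ j, j ≠ i → y j = z j := fun j hj =>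
    (eq_of_hammingDist_eq_one hy hyi hj).symm.trans (eq_of_hammingDist_eq_one hz hzi hj)
  refine hammingDist_eq_one_iff.2 ⟨i, fun j => ⟨fun hj => ?_, ?_⟩⟩
  · by_contra hji
    exact hj (h_off j hji)
  · intro hji h_eq
    rw [hji] at h_eq
    refine hyz (funext fun k => ?_)
    by_cases hk : k = i
    · exact hk ▸ h_eq
    · exact h_off k hk

theorem exists_ne_of_hammingDist_eq_one (h : hammingDist x y = 1) : ∃ i, x i ≠ y i := by
  obtain ⟨i, hi⟩ := hammingDist_eq_one_iff.1 h
  exact ⟨i, (hi i).2 rfl⟩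

end Hamming

/-- Two neighbours of `u` that differ from it in the same coordinate are adjacent. -/
theorem ncard_neighborSet_inter_le_card {ι : Type*} [Fintype ι] {β : ι → Type*}
    [∀ i, DecidableEq (β i)] {G : SimpleGraph (∀ i, β i)} {A : Set (∀ i, β i)}
    (hG : ∀ v w, G.Adj v w ↔ v ∈ A ∧ w ∈ A ∧ hammingDist v w = 1) {W : Set (∀ i, β i)}
    (hW : IsIndep G W) (u : ∀ i, β i) :
    (G.neighborSet u ∩ W).ncard ≤ Fintype.card ι := by
  have h_dir : ∀ v : ↥(G.neighborSet u ∩ W), ∃ i, u i ≠ v.1 i := fun v =>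
    exists_ne_of_hammingDist_eq_one ((hG u v).1 v.2.1).2.2
  choose dir hdir using h_dir
  have h_inj : Function.Injective dir := by
    rintro ⟨v, hvN, hvW⟩ ⟨w, hwN, hwW⟩ hvw
    by_contra hne
    obtain ⟨-, hvA, huv⟩ := (hG u v).1 hvN
    obtain ⟨-, hwA, huw⟩ := (hG u w).1 hwN
    refine hW v hvW w hwW ((hG v w).2 ⟨hvA, hwA, ?_⟩)
    exact hammingDist_eq_one_of_ne_of_ne huv huw (hdir ⟨v, hvN, hvW⟩)
      (hvw ▸ hdir ⟨w, hwN, hwW⟩) fun h => hne (Subtype.ext h)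
  rw [← Nat.card_coe_set_eq, ← Nat.card_eq_fintype_card]
  exact Nat.card_le_card_of_injective dir h_inj

namespace Finset

section Discharging

variable {α β : Type*} (r : α → β → Prop) [∀ a b, Decidable (r a b)] (s : Finset α)
  (t : Finset β) {a : α} {b : β}

open Classical in
/-- Every `a ∈ s` sends `30` units to its neighbours in `t`: all to a single neighbour, `10` to
each of at least three, or, to two neighbours, `12` to one that is the only neighbour of some
`a' ∈ s` and `18` to one that is not. -/
noncomputable def dischargeWeight (a : α) (b : β) : ℕ :=
  if #(t.bipartiteAbove r a) = 1 then 30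
  else if #(t.bipartiteAbove r a) = 2 then
    (if ∃ a' ∈ s, t.bipartiteAbove r a' = {b} then 12 else 18)
  else 10

variable {r s t}

theorem thirty_le_sum_dischargeWeight (h_nonempty : (t.bipartiteAbove r a).Nonempty)
    (h_pair : #(t.bipartiteAbove r a) = 2 →
      ∃ b ∈ t.bipartiteAbove r a, ∀ a' ∈ s, t.bipartiteAbove r a' ≠ {b}) :
    30 ≤ ∑ b ∈ t.bipartiteAbove r a, dischargeWeight r s t a b := by
  classical
  have h_pos := h_nonempty.card_pos
  rcases (by omega : #(t.bipartiteAbove r a) = 1 ∨ #(t.bipartiteAbove r a) = 2 ∨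
    3 ≤ #(t.bipartiteAbove r a)) with h1 | h2 | h3
  · simp [dischargeWeight, h1]
  · obtain ⟨b, hb, hb_priv⟩ := h_pair h2
    have h12 : ∀ b' ∈ t.bipartiteAbove r a, 12 ≤ dischargeWeight r s t a b' := by
      intro b' _
      simp only [dischargeWeight, h2]
      split_ifs <;> omega
    have h18 : dischargeWeight r s t a b = 18 := by
      have : ¬ ∃ a' ∈ s, t.bipartiteAbove r a' = {b} := fun ⟨a', ha', h⟩ => hb_priv a' ha' h
      simp [dischargeWeight, h2, this]
    calc 30 = #((t.bipartiteAbove r a).erase b) • 12 + 18 := by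
          rw [card_erase_of_mem hb, h2, smul_eq_mul]
      _ ≤ ∑ b' ∈ (t.bipartiteAbove r a).erase b, dischargeWeight r s t a b' +
          dischargeWeight r s t a b := by
        rw [h18]
        exact Nat.add_le_add_right (card_nsmul_le_sum _ _ _ fun b' hb' =>
          h12 b' (mem_of_mem_erase hb')) _
      _ = _ := sum_erase_add _ _ hb
  · calc 30 ≤ #(t.bipartiteAbove r a) • 10 := by rw [smul_eq_mul]; omega
      _ ≤ ∑ b ∈ t.bipartiteAbove r a, dischargeWeight r s t a b := by
        refine card_nsmul_le_sum _ _ _ fun b _ => ?_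
        simp only [dischargeWeight]
        split_ifs <;> omega

theorem sum_dischargeWeight_le (hb : b ∈ t) (h_below : #(s.bipartiteBelow r b) ≤ 3)
    (h_unique : ∀ a₁ ∈ s, ∀ a₂ ∈ s, #(t.bipartiteAbove r a₁) = 1 →
      t.bipartiteAbove r a₁ = t.bipartiteAbove r a₂ → a₁ = a₂) :
    ∑ a ∈ s.bipartiteBelow r b, dischargeWeight r s t a b ≤ 54 := by
  have h_single : ∀ a ∈ s.bipartiteBelow r b, #(t.bipartiteAbove r a) = 1 →
      t.bipartiteAbove r a = {b} := by
    intro a ha h1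
    obtain ⟨b', hb'⟩ := card_eq_one.1 h1
    have : b ∈ t.bipartiteAbove r a :=
      (mem_bipartiteAbove r).2 ⟨hb, ((mem_bipartiteBelow r).1 ha).2⟩
    rw [hb', mem_singleton] at this
    rwa [this]
  by_cases hb_priv : ∃ a' ∈ s, t.bipartiteAbove r a' = {b}
  · have h_deg_one : #{a ∈ s.bipartiteBelow r b | #(t.bipartiteAbove r a) = 1} ≤ 1 := by
      refine card_le_one.2 fun a₁ ha₁ a₂ ha₂ => ?_
      rw [mem_filter] at ha₁ ha₂
      exact h_unique a₁ ((mem_bipartiteBelow r).1 ha₁.1).1 a₂ ((mem_bipartiteBelow r).1 ha₂.1).1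
        ha₁.2 ((h_single a₁ ha₁.1 ha₁.2).trans (h_single a₂ ha₂.1 ha₂.2).symm)
    calc ∑ a ∈ s.bipartiteBelow r b, dischargeWeight r s t a b
        ≤ ∑ a ∈ s.bipartiteBelow r b,
            (12 + 18 * if #(t.bipartiteAbove r a) = 1 then 1 else 0) := by
          refine sum_le_sum fun a _ => ?_
          simp only [dischargeWeight, hb_priv, ↓reduceIte]
          split_ifs <;> omega
      _ = 12 * #(s.bipartiteBelow r b) +
          18 * #{a ∈ s.bipartiteBelow r b | #(t.bipartiteAbove r a) = 1} := by
          rw [sum_add_distrib, ← mul_sum, ← card_filter, sum_const, smul_eq_mul, mul_comm]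
      _ ≤ 54 := by omega
  · calc ∑ a ∈ s.bipartiteBelow r b, dischargeWeight r s t a b
        ≤ #(s.bipartiteBelow r b) • 18 := by
          refine sum_le_card_nsmul _ _ _ fun a ha => ?_
          have h1 : #(t.bipartiteAbove r a) ≠ 1 := fun h1 =>
            hb_priv ⟨a, ((mem_bipartiteBelow r).1 ha).1, h_single a ha h1⟩
          simp only [dischargeWeight, h1, ↓reduceIte]
          split_ifs <;> omega
      _ ≤ 54 := by rw [smul_eq_mul]; omega

theorem five_mul_card_le_nine_mul_card
    (h_nonempty : ∀ a ∈ s, (t.bipartiteAbove r a).Nonempty)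
    (h_below : ∀ b ∈ t, #(s.bipartiteBelow r b) ≤ 3)
    (h_unique : ∀ a₁ ∈ s, ∀ a₂ ∈ s, #(t.bipartiteAbove r a₁) = 1 →
      t.bipartiteAbove r a₁ = t.bipartiteAbove r a₂ → a₁ = a₂)
    (h_pair : ∀ a ∈ s, #(t.bipartiteAbove r a) = 2 →
      ∃ b ∈ t.bipartiteAbove r a, ∀ a' ∈ s, t.bipartiteAbove r a' ≠ {b}) :
    5 * #s ≤ 9 * #t := by
  have h_count : #s • 30 ≤ #t • 54 := calc
    #s • 30 ≤ ∑ a ∈ s, ∑ b ∈ t.bipartiteAbove r a, dischargeWeight r s t a b :=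
      card_nsmul_le_sum _ _ _ fun a ha =>
        thirty_le_sum_dischargeWeight (h_nonempty a ha) (h_pair a ha)
    _ = ∑ b ∈ t, ∑ a ∈ s.bipartiteBelow r b, dischargeWeight r s t a b :=
      sum_sum_bipartiteAbove_eq_sum_sum_bipartiteBelow r _
    _ ≤ #t • 54 :=
      sum_le_card_nsmul _ _ _ fun b hb => sum_dischargeWeight_le hb (h_below b hb) h_unique
  rw [smul_eq_mul, smul_eq_mul] at h_count
  omega

end Discharging

end Finset

section TwoMaximal

variable {V : Type*} {G : SimpleGraph V} {U S S' T R I : Set V}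

theorem IsIndep.mono (hT : IsIndep G T) (hI : I ⊆ T) : IsIndep G I :=
  fun v hv w hw => hT v (hI hv) w (hI hw)

theorem IsIndep.neighborSet_inter_sdiff {a : V} (hS' : IsIndep G S') (ha : a ∈ S') :
    G.neighborSet a ∩ (S \ S') = G.neighborSet a ∩ S := by
  ext u
  exact ⟨fun ⟨hau, huS, _⟩ => ⟨hau, huS⟩,
    fun ⟨hau, huS⟩ => ⟨hau, huS, fun huS' => hS' a ha u huS' hau⟩⟩

theorem IsIndep.sdiff_union (hS : IsIndep G S) (hI : IsIndep G I)
    (hN : ∀ v ∈ I, G.neighborSet v ∩ S ⊆ R) : IsIndep G (S \ R ∪ I) := by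
  rintro a (⟨haS, haR⟩ | haI) b (⟨hbS, hbR⟩ | hbI) hab
  · exact hS a haS b hbS hab
  · exact haR (hN b hbI ⟨hab.symm, haS⟩)
  · exact hbR (hN a haI ⟨hab, hbS⟩)
  · exact hI a haI b hbI hab

/-- `(p, n²)`-maximality for every `p ≤ 2`, with `U` in the role of `V_L`. -/
def IsTwoMaximal (G : SimpleGraph V) (U S : Set V) : Prop :=
  ∀ R ⊆ S, R.ncard ≤ 2 → ∀ I ⊆ U \ S, IsIndep G (S \ R ∪ I) → (S \ R ∪ I).ncard ≤ S.ncard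

namespace IsTwoMaximal

variable [Finite V]

theorem ncard_le (h : IsTwoMaximal G U S) (hS : IsIndep G S) (hRS : R ⊆ S) (hR : R.ncard ≤ 2)
    (hIU : I ⊆ U \ S) (hI : IsIndep G I) (hN : ∀ v ∈ I, G.neighborSet v ∩ S ⊆ R) :
    I.ncard ≤ R.ncard := by
  have h_swap := h R hRS hR I hIU (hS.sdiff_union hI hN)
  have h_disj : Disjoint (S \ R) I :=
    Set.disjoint_left.2 fun _ ha haI => (hIU haI).2 ha.1
  rw [Set.ncard_union_eq h_disj, Set.ncard_sdiff hRS] at h_swap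
  have := Set.ncard_le_ncard hRS
  omega

variable {u u₁ u₂ v v₁ v₂ : V}

theorem neighborSet_inter_nonempty (h : IsTwoMaximal G U S) (hS : IsIndep G S)
    (hT : IsIndep G T) (hTU : T ⊆ U \ S) (hv : v ∈ T) : (G.neighborSet v ∩ S).Nonempty := by
  by_contra h_empty
  rw [Set.not_nonempty_iff_eq_empty] at h_empty
  have := h.ncard_le hS (Set.empty_subset S) (by simp) (Set.singleton_subset_iff.2 (hTU hv))
    (hT.mono (Set.singleton_subset_iff.2 hv)) (by simp [h_empty])
  simp at this

theorem eq_of_neighborSet_inter_eq_singleton (h : IsTwoMaximal G U S) (hS : IsIndep G S)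
    (hT : IsIndep G T) (hTU : T ⊆ U \ S) (hv₁ : v₁ ∈ T) (hv₂ : v₂ ∈ T)
    (h₁ : G.neighborSet v₁ ∩ S = {u}) (h₂ : G.neighborSet v₂ ∩ S = {u}) : v₁ = v₂ := by
  by_contra hne
  have hI : {v₁, v₂} ⊆ T := Set.insert_subset hv₁ (Set.singleton_subset_iff.2 hv₂)
  have huS : {u} ⊆ S := h₁ ▸ Set.inter_subset_right
  have := h.ncard_le hS huS (by simp) (hI.trans hTU) (hT.mono hI) (by
    rintro v (rfl | rfl)
    exacts [h₁.le, h₂.le])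
  rw [Set.ncard_pair hne, Set.ncard_singleton] at this
  omega

theorem neighborSet_inter_ne_pair (h : IsTwoMaximal G U S) (hS : IsIndep G S)
    (hT : IsIndep G T) (hTU : T ⊆ U \ S) (hv : v ∈ T) (hv₁ : v₁ ∈ T) (hv₂ : v₂ ∈ T)
    (h₁ : G.neighborSet v₁ ∩ S = {u₁}) (h₂ : G.neighborSet v₂ ∩ S = {u₂}) (hu : u₁ ≠ u₂) :
    G.neighborSet v ∩ S ≠ {u₁, u₂} := by
  intro h_pair
  have hv₁₂ : v₁ ≠ v₂ := by rintro rfl; exact hu (Set.singleton_injective (h₁.symm.trans h₂))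
  have hvv₁ : v ≠ v₁ := by
    rintro rfl
    have : u₂ ∈ ({u₁} : Set V) := h₁ ▸ h_pair ▸ Set.mem_insert_of_mem _ rfl
    exact hu this.symm
  have hvv₂ : v ≠ v₂ := by
    rintro rfl
    have : u₁ ∈ ({u₂} : Set V) := h₂ ▸ h_pair ▸ Set.mem_insert _ _
    exact hu this
  have hI : {v, v₁, v₂} ⊆ T :=
    Set.insert_subset hv (Set.insert_subset hv₁ (Set.singleton_subset_iff.2 hv₂))
  have hR : {u₁, u₂} ⊆ S := h_pair ▸ Set.inter_subset_right
  have := h.ncard_le hS hR (Set.ncard_pair hu).le (hI.trans hTU) (hT.mono hI) (by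
    rintro w (rfl | rfl | rfl)
    · exact h_pair.le
    · exact h₁.le.trans (Set.singleton_subset_iff.2 (Set.mem_insert _ _))
    · exact h₂.le.trans (Set.singleton_subset_iff.2 (Set.mem_insert_of_mem _ rfl)))
  rw [Set.ncard_eq_three.2 ⟨v, v₁, v₂, hvv₁, hvv₂, hv₁₂, rfl⟩, Set.ncard_pair hu] at this
  omega

open Finset in
theorem five_mul_ncard_sdiff_le (h : IsTwoMaximal G U S) (hS : IsIndep G S)
    (hG : ∀ u W, IsIndep G W → (G.neighborSet u ∩ W).ncard ≤ 3)
    (hS'U : S' ⊆ U) (hS' : IsIndep G S') : 5 * (S' \ S).ncard ≤ 9 * (S \ S').ncard := by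
  classical
  obtain ⟨s, hs⟩ := (S' \ S).toFinite.exists_finset_coe
  obtain ⟨t, ht⟩ := (S \ S').toFinite.exists_finset_coe
  have hTU : S' \ S ⊆ U \ S := Set.sdiff_subset_sdiff_left hS'U
  have hT : IsIndep G (S' \ S) := hS'.mono Set.sdiff_subset
  have hs_mem : ∀ {a}, a ∈ s → a ∈ S' \ S := fun ha => hs ▸ Finset.mem_coe.2 ha
  have h_above : ∀ a ∈ s, (t.bipartiteAbove G.Adj a : Set V) = G.neighborSet a ∩ S := by
    intro a ha
    rw [← hS'.neighborSet_inter_sdiff (hs_mem ha).1, ← ht]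
    ext u
    simp [and_comm]
  have h_singleton : ∀ a ∈ s, ∀ b, t.bipartiteAbove G.Adj a = {b} →
      G.neighborSet a ∩ S = {b} := fun a ha b hb => by
    rw [← h_above a ha, hb, coe_singleton]
  rw [← hs, ← ht, Set.ncard_coe_finset, Set.ncard_coe_finset]
  refine five_mul_card_le_nine_mul_card (r := G.Adj) (fun a ha => ?_) (fun b hb => ?_)
    (fun a₁ ha₁ a₂ ha₂ h1 h12 => ?_) (fun a ha h2 => ?_)
  · rw [← coe_nonempty, h_above a ha]
    exact h.neighborSet_inter_nonempty hS hT hTU (hs_mem ha)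
  · calc #(s.bipartiteBelow G.Adj b) ≤ (G.neighborSet b ∩ S').ncard := by
          rw [← Set.ncard_coe_finset]
          refine Set.ncard_le_ncard fun a ha => ?_
          rw [coe_bipartiteBelow] at ha
          exact ⟨ha.2.symm, (hs_mem ha.1).1⟩
      _ ≤ 3 := hG b S' hS'
  · obtain ⟨b, hb⟩ := card_eq_one.1 h1
    exact h.eq_of_neighborSet_inter_eq_singleton hS hT hTU (hs_mem ha₁) (hs_mem ha₂)
      (h_singleton a₁ ha₁ b hb) (h_singleton a₂ ha₂ b (h12 ▸ hb))
  · obtain ⟨b₁, b₂, hb, h_eq⟩ := card_eq_two.1 h2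
    by_contra! h_priv
    obtain ⟨a₁, ha₁, h₁⟩ := h_priv b₁ (h_eq ▸ mem_insert_self _ _)
    obtain ⟨a₂, ha₂, h₂⟩ := h_priv b₂ (h_eq ▸ mem_insert_of_mem (mem_singleton_self _))
    refine h.neighborSet_inter_ne_pair hS hT hTU (hs_mem ha) (hs_mem ha₁) (hs_mem ha₂)
      (h_singleton a₁ ha₁ b₁ h₁) (h_singleton a₂ ha₂ b₂ h₂) hb ?_
    rw [← h_above a ha, h_eq, coe_pair]

theorem five_mul_ncard_le (h : IsTwoMaximal G U S) (hS : IsIndep G S)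
    (hG : ∀ u W, IsIndep G W → (G.neighborSet u ∩ W).ncard ≤ 3)
    (hS'U : S' ⊆ U) (hS' : IsIndep G S') : 5 * S'.ncard ≤ 9 * S.ncard := by
  have h_sdiff := h.five_mul_ncard_sdiff_le hS hG hS'U hS'
  have hS'_split := Set.ncard_inter_add_ncard_sdiff_eq_ncard S' S
  have hS_split := Set.ncard_inter_add_ncard_sdiff_eq_ncard S S'
  rw [Set.inter_comm] at hS_split
  omega

end IsTwoMaximal

end TwoMaximal

theorem two_maximal_five_ninth_approx_general (n : ℕ)
    (L : Set (Fin 3 → Fin n))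
    (S : Set (Fin 3 → Fin n)) (hind : IsIndep (GraphL L) S)
    (hmax : ∀ p : ℕ, p ≤ 2 → ∀ R ⊆ S, R.ncard = p → ∀ I ⊆ VL L \ S,
      IsIndep (GraphL L) ((S \ R) ∪ I) → ((S \ R) ∪ I).ncard ≤ S.ncard)
    (Sstar : Set (Fin 3 → Fin n)) (hstar : Sstar ⊆ VL L)
    (hindstar : IsIndep (GraphL L) Sstar) :
    5 * Sstar.ncard ≤ 9 * S.ncard := by
  have h_two_max : IsTwoMaximal (GraphL L) (VL L) S :=
    fun R hRS hR I hI => hmax R.ncard hR R hRS rfl I hI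
  have h_claw : ∀ u W, IsIndep (GraphL L) W → ((GraphL L).neighborSet u ∩ W).ncard ≤ 3 :=
    fun u W hW => by simpa using ncard_neighborSet_inter_le_card (fun _ _ => Iff.rfl) hW u
  exact h_two_max.five_mul_ncard_le hind h_claw hstar hindstar

/-- Theorem 5, part 2: a 2-maximal solution (i.e. `(p,n²)`-maximal for
every `p ∈ {0,1,2}`) is a 5/9-approximate solution of the PLSE instance `L`. -/
theorem two_maximal_five_ninth_approx (n : ℕ) (hn : 2 ≤ n)
    (L : Set (Fin 3 → Fin n)) (hL : IsPLS L)
    (S : Set (Fin 3 → Fin n)) (hsub : S ⊆ VL L) (hind : IsIndep (GraphL L) S)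
    (hmax : ∀ p : ℕ, p ≤ 2 → ∀ R ⊆ S, R.ncard = p → ∀ I ⊆ VL L \ S,
      IsIndep (GraphL L) ((S \ R) ∪ I) → ((S \ R) ∪ I).ncard ≤ S.ncard)
    (Sstar : Set (Fin 3 → Fin n)) (hstar : Sstar ⊆ VL L)
    (hindstar : IsIndep (GraphL L) Sstar) :
    5 * Sstar.ncard ≤ 9 * S.ncard :=
  two_maximal_five_ninth_approx_general n L S hind hmax Sstar hstar hindstar
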